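/- arXiv:2106.00831 — 2 statements merged into one kernel-verified Lean document; each statement's English description precedes it below -/
import Mathlib

section
/- For the 4-link switch with the 6 pair-types of K_4 and all p_j = q_i = 1, the rate vector λ = (0.3, 0.3, 0.3, 0.2, 0.45, 0.2) cannot be written as ∑_σ c_σ σ with c_σ ≥ 0, ∑_σ c_σ < 1, where σ ranges over {0,1}^6 vectors respecting the per-link constraint; indeed any nonnegative combination representing λ has coefficient sum at least 1.05 (in particular λ ∉ Λ_Q even though λ ∈ Λ). -/
/-!
The service types `0, 2, 4` are the edges of the triangle on the links `{0, 1, 3}`, and a partial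
matching contains at most one edge of a triangle: summing the three vertex constraints gives twice
its number of triangle edges at most `3`. So the indicator of those three types is a feasible dual
vector, and weak duality bounds the coefficient sum of any representation of `λ` below by
`λ₀ + λ₂ + λ₄ = 0.3 + 0.3 + 0.45 = 1.05`.
-/

/-- The 6 pair-types of the 4-link switch, as edges of K_4 (0-indexed links). -/
def L6 : Fin 6 → Finset (Fin 4) :=
  ![{0, 1}, {0, 2}, {0, 3}, {1, 2}, {1, 3}, {2, 3}]

/-- The arrival rate vector λ = (0.3, 0.3, 0.3, 0.2, 0.45, 0.2). -/
noncomputable def lam6 : Fin 6 → ℝ := ![0.3, 0.3, 0.3, 0.2, 0.45, 0.2]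

open Finset

theorem dual_le_sum_coeff {ι κ : Type*} [Fintype ι] (S : Finset κ) (v : κ → ι → ℝ)
    (c : κ → ℝ) (y : ι → ℝ) (hc : ∀ σ ∈ S, 0 ≤ c σ) (hy : ∀ σ ∈ S, ∑ i, y i * v σ i ≤ 1) :
    ∑ i, y i * ∑ σ ∈ S, c σ * v σ i ≤ ∑ σ ∈ S, c σ := by
  calc ∑ i, y i * ∑ σ ∈ S, c σ * v σ i = ∑ σ ∈ S, c σ * ∑ i, y i * v σ i := by
        simp only [mul_sum]
        rw [sum_comm]
        exact sum_congr rfl fun _ _ => sum_congr rfl fun _ _ => by ring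
    _ ≤ ∑ σ ∈ S, c σ :=
        sum_le_sum fun σ hσ => mul_le_of_le_one_right (hc σ hσ) (hy σ hσ)

theorem sum_filter_subset_le_card_div_two {ι V : Type*} [Fintype ι] [DecidableEq V]
    (L : ι → Finset V) (hL : ∀ i, #(L i) = 2) (σ : ι → ℕ) (U : Finset V)
    (hσ : ∀ r ∈ U, ∑ i ∈ univ.filter (fun i => r ∈ L i), σ i ≤ 1) :
    ∑ i ∈ univ.filter (fun i => L i ⊆ U), σ i ≤ #U / 2 := by
  set T := univ.filter (fun i => L i ⊆ U)
  rw [Nat.le_div_iff_mul_le two_pos, mul_comm]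
  calc 2 * ∑ i ∈ T, σ i = ∑ i ∈ T, ∑ r ∈ U, if r ∈ L i then σ i else 0 := by
        rw [mul_sum]
        refine sum_congr rfl fun i hi => ?_
        rw [sum_ite_mem, inter_eq_right.mpr (mem_filter.mp hi).2, sum_const, hL, smul_eq_mul]
    _ = ∑ r ∈ U, ∑ i ∈ T.filter (fun i => r ∈ L i), σ i := by
        rw [sum_comm]
        simp only [sum_filter]
    _ ≤ ∑ r ∈ U, ∑ i ∈ univ.filter (fun i => r ∈ L i), σ i :=
        sum_le_sum fun r _ => sum_le_sum_of_subset (filter_subset_filter _ (subset_univ T))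
    _ ≤ ∑ _r ∈ U, 1 := sum_le_sum hσ
    _ = #U := by rw [card_eq_sum_ones]

theorem card_L6 (i : Fin 6) : #(L6 i) = 2 := by
  fin_cases i <;> rfl

/-- With all `p_j = q_i = 1`, any nonnegative combination of feasible service
vectors (partial matchings of K_4) representing λ = (0.3,0.3,0.3,0.2,0.45,0.2)
has coefficient sum at least 1.05 > 1; in particular no representation with
coefficient sum < 1 exists, so λ ∉ Λ_Q. -/
theorem stmt5 (S : Finset (Fin 6 → ℕ)) (c : (Fin 6 → ℕ) → ℝ)
    (hS : ∀ σ ∈ S, (∀ i, σ i ≤ 1) ∧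
      ∀ r : Fin 4, ∑ i ∈ Finset.univ.filter (fun i => r ∈ L6 i), σ i ≤ 1)
    (hc : ∀ σ, 0 ≤ c σ)
    (hrep : ∀ i : Fin 6, lam6 i = ∑ σ ∈ S, c σ * (σ i : ℝ)) :
    (1.05 : ℝ) ≤ ∑ σ ∈ S, c σ ∧ ¬ (∑ σ ∈ S, c σ < 1) := by
  set U : Finset (Fin 4) := {0, 1, 3}
  have htriangle : univ.filter (fun i => L6 i ⊆ U) = {0, 2, 4} := by decide
  have hdual : ∀ σ ∈ S, ∑ i, (if L6 i ⊆ U then 1 else 0) * (σ i : ℝ) ≤ 1 := by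
    intro σ hσ
    have h := sum_filter_subset_le_card_div_two L6 card_L6 σ U fun r _ => (hS σ hσ).2 r
    simp only [ite_mul, one_mul, zero_mul, ← sum_filter]
    exact_mod_cast h.trans (by decide)
  have hbound := dual_le_sum_coeff S (fun σ i => (σ i : ℝ)) c _ (fun σ _ => hc σ) hdual
  simp only [← hrep, ite_mul, one_mul, zero_mul, ← sum_filter, htriangle] at hbound
  have hval : ∑ i ∈ {0, 2, 4}, lam6 i = 1.05 := by
    simp only [lam6, mem_insert, mem_singleton, Fin.reduceEq, or_self, not_false_eq_true,
      sum_insert, sum_singleton, Matrix.cons_val_zero, Matrix.cons_val]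
    norm_num
  have hcoeff : (1.05 : ℝ) ≤ ∑ σ ∈ S, c σ := hval ▸ hbound
  exact ⟨hcoeff, not_lt.mpr (by linarith)⟩
end

section
/- If λ ∈ Λ_Q, i.e., there exist nonnegative weights v(b, a, π) with λ = ∑_a P(T = a) ∑_{b ≠ 0} ∑_{π ∈ M} v(b,a,π) u(b,a,π) and ∑_{b≠0} ∑_π v(b,a,π) < 1 for every a, then there exists ε > 0 such that for all queue vectors Q ∈ ℤ_+^M: λ·Q − ∑_a P(T = a) max_{π ∈ M} ∑_i u_i(Q, a, π) Q_i ≤ −ε ‖Q‖, where ‖Q‖ is the Euclidean norm. -/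
/-- The service success weight
`u_i(b, a, π) = q_i · 1{π_i = 1} · 1{b_i > 0} · 1{a_j = 1 ∀ j ∈ L_i}`. -/
noncomputable def u {M K : ℕ} (q : Fin M → ℝ) (L : Fin M → Finset (Fin K))
    (b : Fin M → ℕ) (a : Fin K → Bool) (π : Fin M → Bool) (i : Fin M) : ℝ :=
  q i * (if π i then 1 else 0) * (if 0 < b i then 1 else 0) *
    (if ∀ j ∈ L i, a j then 1 else 0)

/-- A matching: each link is used by at most one selected type, and the
selection is maximal (no zero coordinate can be flipped to one). -/
def isMatching {M K : ℕ} (L : Fin M → Finset (Fin K)) (π : Fin M → Bool) : Prop :=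
  (∀ j : Fin K,
    ∑ i ∈ Finset.univ.filter (fun i => j ∈ L i), (if π i then 1 else 0) ≤ 1) ∧
  ∀ r : Fin M, π r = false → ∃ j : Fin K,
    1 < ∑ i ∈ Finset.univ.filter (fun i => j ∈ L i),
          (if Function.update π r true i then 1 else 0)

/-- Probability of link state `a` when link `j` is up independently with
probability `p j`. -/
noncomputable def linkProb {K : ℕ} (p : Fin K → ℝ) (a : Fin K → Bool) : ℝ :=
  ∏ j, if a j then p j else 1 - p j

/-- Drift lemma (Lemma 4.1): if `λ ∈ Λ_Q`, i.e. there are nonnegative,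
finitely supported weights `v(b,a,π)` (supported on nonzero `b` and on
matchings) with
`λ = ∑_a P(T=a) ∑_{b≠0} ∑_π v(b,a,π) u(b,a,π)` and
`∑_{b,π} v(b,a,π) < 1` for every `a`, then there is `ε > 0` with
`λ·Q − ∑_a P(T=a) max_{π∈M} ∑_i u_i(Q,a,π) Q_i ≤ −ε‖Q‖` for all `Q ∈ ℤ_+^M`. -/
theorem stmt8 (M K : ℕ) (hM : 0 < M) (p : Fin K → ℝ) (q : Fin M → ℝ)
    (L : Fin M → Finset (Fin K)) (lam : Fin M → ℝ)
    (hp : ∀ j, 0 < p j ∧ p j ≤ 1) (hq : ∀ i, 0 < q i ∧ q i ≤ 1)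
    (hmatch : ∀ i : Fin M, ∃ π : Fin M → Bool, isMatching L π ∧ π i = true)
    (v : (Fin M → ℕ) → (Fin K → Bool) → (Fin M → Bool) → ℝ)
    (B : Finset (Fin M → ℕ))
    (hv0 : ∀ b a π, 0 ≤ v b a π)
    (hvsupp : ∀ b ∉ B, ∀ a π, v b a π = 0)
    (hvzero : ∀ a π, v (fun _ => 0) a π = 0)
    (hvmatch : ∀ b a π, ¬ isMatching L π → v b a π = 0)
    (hrep : ∀ i, lam i = ∑ a : Fin K → Bool, linkProb p a *
      ∑ b ∈ B, ∑ π : Fin M → Bool, v b a π * u q L b a π i)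
    (hlt1 : ∀ a : Fin K → Bool,
      ∑ b ∈ B, ∑ π : Fin M → Bool, v b a π < 1) :
    ∃ ε > (0 : ℝ), ∀ Q : Fin M → ℕ,
      (∑ i, lam i * (Q i : ℝ)) -
        ∑ a : Fin K → Bool, linkProb p a *
          (⨆ π : {π : Fin M → Bool // isMatching L π},
            ∑ i, u q L Q a π.1 i * (Q i : ℝ))
      ≤ -ε * Real.sqrt (∑ i, (Q i : ℝ) ^ 2) := by
  classical
  haveI : Nonempty (Fin M) := ⟨⟨0, hM⟩⟩
  haveI hne : Nonempty {π : Fin M → Bool // isMatching L π} := by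
    obtain ⟨π, hπ, -⟩ := hmatch ⟨0, hM⟩
    exact ⟨⟨π, hπ⟩⟩
  -- basic nonnegativity facts
  have hu_nonneg : ∀ (b : Fin M → ℕ) a π i, 0 ≤ u q L b a π i := by
    intro b a π i
    unfold u
    have := (hq i).1
    split_ifs <;> nlinarith
  have hP_nonneg : ∀ a : Fin K → Bool, 0 ≤ linkProb p a := by
    intro a
    apply Finset.prod_nonneg
    intro j _
    rcases hp j with ⟨h1, h2⟩
    split_ifs <;> linarith
  -- the supremum
  set S : (Fin K → Bool) → (Fin M → ℕ) → ℝ := fun a Q =>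
    ⨆ π : {π : Fin M → Bool // isMatching L π},
      ∑ i, u q L Q a π.1 i * (Q i : ℝ) with hSdef
  have hbdd : ∀ a Q, BddAbove (Set.range fun π : {π : Fin M → Bool // isMatching L π} =>
      ∑ i, u q L Q a π.1 i * (Q i : ℝ)) := fun a Q => Set.Finite.bddAbove (Set.finite_range _)
  have hsum_nonneg : ∀ (Q : Fin M → ℕ) a (π : Fin M → Bool),
      0 ≤ ∑ i, u q L Q a π i * (Q i : ℝ) := by
    intro Q a π
    exact Finset.sum_nonneg fun i _ => mul_nonneg (hu_nonneg _ _ _ _) (Nat.cast_nonneg _)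
  have hS_nonneg : ∀ a Q, 0 ≤ S a Q := by
    intro a Q
    obtain ⟨π⟩ := hne
    exact le_trans (hsum_nonneg Q a π.1) (le_ciSup (hbdd a Q) π)
  -- monotonicity of u in the queue argument: u(b) * Q_i ≤ u(Q) * Q_i
  have hu_mono : ∀ (b Q : Fin M → ℕ) a π i,
      u q L b a π i * (Q i : ℝ) ≤ u q L Q a π i * (Q i : ℝ) := by
    intro b Q a π i
    by_cases h : 0 < Q i
    · refine mul_le_mul_of_nonneg_right ?_ (Nat.cast_nonneg _)
      unfold u
      rw [if_pos h]
      have h1 : (if 0 < b i then (1:ℝ) else 0) ≤ 1 := by split_ifs <;> norm_num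
      have h2 : 0 ≤ q i * (if π i then (1:ℝ) else 0) := by
        have := (hq i).1; split_ifs <;> nlinarith
      have h3 : (0:ℝ) ≤ (if ∀ j ∈ L i, a j then (1:ℝ) else 0) := by
        split_ifs <;> norm_num
      calc q i * (if π i then (1:ℝ) else 0) * (if 0 < b i then (1:ℝ) else 0) *
            (if ∀ j ∈ L i, a j then (1:ℝ) else 0)
          ≤ q i * (if π i then (1:ℝ) else 0) * 1 * (if ∀ j ∈ L i, a j then (1:ℝ) else 0) := by
            apply mul_le_mul_of_nonneg_right _ h3
            exact mul_le_mul_of_nonneg_left h1 h2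
        _ = q i * (if π i then (1:ℝ) else 0) * 1 * (if ∀ j ∈ L i, a j then (1:ℝ) else 0) := rfl
    · have : Q i = 0 := by omega
      simp [this]
  -- any matching sum (with any b) is at most the supremum
  have hle_S : ∀ (b Q : Fin M → ℕ) a (π : Fin M → Bool) (hπ : isMatching L π),
      ∑ i, u q L b a π i * (Q i : ℝ) ≤ S a Q := by
    intro b Q a π hπ
    calc ∑ i, u q L b a π i * (Q i : ℝ)
        ≤ ∑ i, u q L Q a π i * (Q i : ℝ) :=
          Finset.sum_le_sum fun i _ => hu_mono b Q a π i
      _ ≤ S a Q := le_ciSup (hbdd a Q) ⟨π, hπ⟩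
  -- the constants
  set V : (Fin K → Bool) → ℝ := fun a => ∑ b ∈ B, ∑ π : Fin M → Bool, v b a π with hVdef
  have hVnonneg : ∀ a, 0 ≤ V a := fun a =>
    Finset.sum_nonneg fun b _ => Finset.sum_nonneg fun π _ => hv0 b a π
  set m : ℝ := Finset.univ.inf' Finset.univ_nonempty (fun a : Fin K → Bool => 1 - V a) with hmdef
  have hm_pos : 0 < m := by
    rw [hmdef, Finset.lt_inf'_iff]
    intro a _
    have := hlt1 a
    simp only [hVdef]
    linarith
  have hm_le : ∀ a : Fin K → Bool, m ≤ 1 - V a := fun a =>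
    Finset.inf'_le _ (Finset.mem_univ a)
  set qmin : ℝ := Finset.univ.inf' Finset.univ_nonempty q with hqmdef
  have hqmin_pos : 0 < qmin := by
    rw [hqmdef, Finset.lt_inf'_iff]
    intro i _
    exact (hq i).1
  have hqmin_le : ∀ i, qmin ≤ q i := fun i => Finset.inf'_le _ (Finset.mem_univ i)
  set a1 : Fin K → Bool := fun _ => true with ha1def
  set c : ℝ := linkProb p a1 with hcdef
  have hc_pos : 0 < c := by
    rw [hcdef]
    unfold linkProb
    apply Finset.prod_pos
    intro j _
    simp [ha1def, (hp j).1]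
  have hsqM_pos : 0 < Real.sqrt M := Real.sqrt_pos.mpr (by exact_mod_cast hM)
  refine ⟨m * c * qmin / Real.sqrt M, by positivity, ?_⟩
  intro Q
  -- Step 1: rewrite λ·Q
  have h1 : ∑ i, lam i * (Q i : ℝ) =
      ∑ a : Fin K → Bool, linkProb p a *
        ∑ b ∈ B, ∑ π : Fin M → Bool, v b a π * ∑ i, u q L b a π i * (Q i : ℝ) := by
    simp only [hrep, Finset.sum_mul, Finset.mul_sum, mul_assoc]
    rw [Finset.sum_comm]
    refine Finset.sum_congr rfl fun a _ => ?_
    rw [Finset.sum_comm]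
    refine Finset.sum_congr rfl fun b _ => ?_
    rw [Finset.sum_comm]
  -- Step 2: bound per link-state
  have h2 : ∀ a : Fin K → Bool,
      ∑ b ∈ B, ∑ π : Fin M → Bool, v b a π * ∑ i, u q L b a π i * (Q i : ℝ)
        ≤ V a * S a Q := by
    intro a
    rw [hVdef]
    simp only [Finset.sum_mul]
    refine Finset.sum_le_sum fun b _ => Finset.sum_le_sum fun π _ => ?_
    by_cases hπ : isMatching L π
    · exact mul_le_mul_of_nonneg_left (hle_S b Q a π hπ) (hv0 b a π)
    · simp [hvmatch b a π hπ]
  -- Step 3: the key lower bound : qmin * Q i ≤ S a1 Q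
  have h3 : ∀ i, qmin * (Q i : ℝ) ≤ S a1 Q := by
    intro i
    obtain ⟨π, hπ, hπi⟩ := hmatch i
    have hui : qmin * (Q i : ℝ) ≤ u q L Q a1 π i * (Q i : ℝ) := by
      by_cases h : 0 < Q i
      · refine mul_le_mul_of_nonneg_right ?_ (Nat.cast_nonneg _)
        unfold u
        rw [if_pos h, hπi, if_pos rfl]
        have : (if ∀ j ∈ L i, a1 j then (1:ℝ) else 0) = 1 := by
          rw [if_pos]; intro j _; rfl
        rw [this]
        simpa using hqmin_le i
      · have : Q i = 0 := by omega
        simp [this]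
    calc qmin * (Q i : ℝ) ≤ u q L Q a1 π i * (Q i : ℝ) := hui
      _ ≤ ∑ k, u q L Q a1 π k * (Q k : ℝ) :=
          Finset.single_le_sum (f := fun k => u q L Q a1 π k * (Q k : ℝ))
            (fun k _ => mul_nonneg (hu_nonneg _ _ _ _) (Nat.cast_nonneg _)) (Finset.mem_univ i)
      _ ≤ S a1 Q := le_ciSup (hbdd a1 Q) ⟨π, hπ⟩
  -- Step 4: norm bound
  have h4 : qmin * Real.sqrt (∑ i, (Q i : ℝ) ^ 2) ≤ Real.sqrt M * S a1 Q := by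
    have hsq : qmin ^ 2 * ∑ i, (Q i : ℝ) ^ 2 ≤ (M : ℝ) * (S a1 Q) ^ 2 := by
      calc qmin ^ 2 * ∑ i, (Q i : ℝ) ^ 2 = ∑ i, (qmin * (Q i : ℝ)) ^ 2 := by
            rw [Finset.mul_sum]; exact Finset.sum_congr rfl fun i _ => by ring
        _ ≤ ∑ _i : Fin M, (S a1 Q) ^ 2 :=
            Finset.sum_le_sum fun i _ =>
              pow_le_pow_left₀ (mul_nonneg hqmin_pos.le (Nat.cast_nonneg _)) (h3 i) 2
        _ = (M : ℝ) * (S a1 Q) ^ 2 := by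
            simp [Finset.sum_const, Finset.card_univ, nsmul_eq_mul]
    calc qmin * Real.sqrt (∑ i, (Q i : ℝ) ^ 2)
        = Real.sqrt (qmin ^ 2 * ∑ i, (Q i : ℝ) ^ 2) := by
          rw [Real.sqrt_mul (sq_nonneg _), Real.sqrt_sq hqmin_pos.le]
      _ ≤ Real.sqrt ((M : ℝ) * (S a1 Q) ^ 2) := Real.sqrt_le_sqrt hsq
      _ = Real.sqrt M * S a1 Q := by
          rw [Real.sqrt_mul (Nat.cast_nonneg _), Real.sqrt_sq (hS_nonneg a1 Q)]
  -- Step 5: put everything together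
  have h5 : ∑ i, lam i * (Q i : ℝ) -
      ∑ a : Fin K → Bool, linkProb p a * S a Q ≤ -(m * c * S a1 Q) := by
    have hA : ∑ i, lam i * (Q i : ℝ) ≤
        ∑ a : Fin K → Bool, linkProb p a * (V a * S a Q) := by
      rw [h1]
      exact Finset.sum_le_sum fun a _ => mul_le_mul_of_nonneg_left (h2 a) (hP_nonneg a)
    have hB : m * c * S a1 Q ≤
        ∑ a : Fin K → Bool, linkProb p a * ((1 - V a) * S a Q) := by
      have hterm : ∀ a : Fin K → Bool, 0 ≤ linkProb p a * ((1 - V a) * S a Q) := by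
        intro a
        have h1Va : 0 ≤ 1 - V a := le_trans hm_pos.le (hm_le a)
        exact mul_nonneg (hP_nonneg a) (mul_nonneg h1Va (hS_nonneg a Q))
      calc m * c * S a1 Q ≤ linkProb p a1 * ((1 - V a1) * S a1 Q) := by
            rw [hcdef]
            have := hm_le a1
            have := hS_nonneg a1 Q
            have := hP_nonneg a1
            nlinarith [mul_le_mul_of_nonneg_right (hm_le a1) (hS_nonneg a1 Q)]
        _ ≤ ∑ a : Fin K → Bool, linkProb p a * ((1 - V a) * S a Q) :=
            Finset.single_le_sum (fun a _ => hterm a) (Finset.mem_univ a1)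
    have hsplit : ∑ a : Fin K → Bool, linkProb p a * ((1 - V a) * S a Q) =
        ∑ a : Fin K → Bool, linkProb p a * S a Q -
          ∑ a : Fin K → Bool, linkProb p a * (V a * S a Q) := by
      rw [← Finset.sum_sub_distrib]
      exact Finset.sum_congr rfl fun a _ => by ring
    rw [hsplit] at hB
    linarith
  have h6 : m * c * qmin / Real.sqrt M * Real.sqrt (∑ i, (Q i : ℝ) ^ 2) ≤ m * c * S a1 Q := by
    rw [div_mul_eq_mul_div, div_le_iff₀ hsqM_pos]
    calc m * c * qmin * Real.sqrt (∑ i, (Q i : ℝ) ^ 2)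
        = (m * c) * (qmin * Real.sqrt (∑ i, (Q i : ℝ) ^ 2)) := by ring
      _ ≤ (m * c) * (Real.sqrt M * S a1 Q) :=
          mul_le_mul_of_nonneg_left h4 (by positivity)
      _ = m * c * S a1 Q * Real.sqrt M := by ring
  rw [neg_mul]
  calc (∑ i, lam i * (Q i : ℝ)) -
        ∑ a : Fin K → Bool, linkProb p a *
          (⨆ π : {π : Fin M → Bool // isMatching L π},
            ∑ i, u q L Q a π.1 i * (Q i : ℝ))
      ≤ -(m * c * S a1 Q) := h5
    _ ≤ -(m * c * qmin / Real.sqrt M * Real.sqrt (∑ i, (Q i : ℝ) ^ 2)) := neg_le_neg h6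
end
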